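/- arXiv:2211.10067 — 3 statements merged into one kernel-verified Lean document; each statement's English description precedes it below -/
import Mathlib

section
/- Let f : ℝ → ℝ be continuous with f(0) = 0, F(t) = ∫₀ᵗ f(s) ds, and suppose t ↦ f(t)/t is strictly increasing on (0, ∞). Then the function t ↦ t·f(t) − 2·F(t) is strictly increasing on (0, ∞). -/
/-! With `c = f b / b`, the hypothesis gives `f s < c s` on `(a, b)`, so
`2 (F b - F a) < c (b² - a²)`. Since `b f b = c b²`, this yields
`(b f b - 2 F b) - (a f a - 2 F a) > a² (f b / b - f a / a) > 0`. -/

open Set MeasureTheory intervalIntegral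

theorem intervalIntegral_lt_of_lt_const_mul {f : ℝ → ℝ} {a b c : ℝ}
    (hf : IntervalIntegrable f volume a b) (hab : a < b) (hlt : ∀ s ∈ Ioo a b, f s < c * s) :
    ∫ s in a..b, f s < c * (b ^ 2 - a ^ 2) / 2 := by
  have hlin : IntervalIntegrable (fun s => c * s) volume a b :=
    (continuous_const.mul continuous_id).intervalIntegrable a b
  have hpos := intervalIntegral_pos_of_pos_on (hlin.sub hf) (fun s hs => sub_pos.2 (hlt s hs)) hab
  rw [integral_sub hlin hf, intervalIntegral.integral_const_mul, integral_id] at hpos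
  linarith

theorem stmt_1_general (f : ℝ → ℝ) (hf : Continuous f)
    (F : ℝ → ℝ) (hF : ∀ t, F t = ∫ s in (0:ℝ)..t, f s)
    (hmono : StrictMonoOn (fun t => f t / t) (Set.Ioi 0)) :
    StrictMonoOn (fun t => t * f t - 2 * F t) (Set.Ioi 0) := by
  intro a ha b hb hab
  have ha' : 0 < a := ha
  have hb' : 0 < b := hb
  have hratio : f a / a < f b / b := hmono ha hb hab
  have hFab : F b - F a = ∫ s in a..b, f s := by
    rw [hF, hF, integral_interval_sub_left (hf.intervalIntegrable 0 b) (hf.intervalIntegrable 0 a)]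
  have hint : ∫ s in a..b, f s < f b / b * (b ^ 2 - a ^ 2) / 2 :=
    intervalIntegral_lt_of_lt_const_mul (hf.intervalIntegrable a b) hab fun s hs =>
      have hs0 : 0 < s := ha'.trans hs.1
      (div_lt_iff₀ hs0).1 (hmono hs0 hb hs.2)
  have hfa : a * f a < f b / b * a ^ 2 := by
    calc a * f a = f a / a * a ^ 2 := by field_simp
      _ < f b / b * a ^ 2 := by gcongr
  have hfb : b * f b = f b / b * b ^ 2 := by field_simp
  simp only
  linarith

theorem stmt_1 (f : ℝ → ℝ) (hf : Continuous f) (h0 : f 0 = 0)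
    (F : ℝ → ℝ) (hF : ∀ t, F t = ∫ s in (0:ℝ)..t, f s)
    (hmono : StrictMonoOn (fun t => f t / t) (Set.Ioi 0)) :
    StrictMonoOn (fun t => t * f t - 2 * F t) (Set.Ioi 0) :=
  stmt_1_general f hf F hF hmono
end

section
/- Let f : ℝ → ℝ be continuous with f(0) = 0, F(t) = ∫₀ᵗ f(s) ds, and suppose t ↦ f(t)/|t| is strictly increasing on (−∞, 0). Then t ↦ t·f(t) − 2·F(t) is strictly decreasing on (−∞, 0). -/
/-!
Write `f t = -t * g t` with `g t = f t / |t|` increasing on `t < 0`. For `a < b < 0` we have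
`f s > -g a * s` on `(a, b)`, hence `2 ∫ₐᵇ f > g a * (a² - b²)`, and the increment of
`t f t - 2 F t` from `a` to `b` is less than `b² (g a - g b) < 0`.
-/

open intervalIntegral MeasureTheory

theorem mul_sq_sub_sq_lt_two_mul_integral {f : ℝ → ℝ} {a b m : ℝ} (hab : a < b)
    (hf : IntervalIntegrable f volume a b) (hlt : ∀ s ∈ Set.Ioo a b, m * s < f s) :
    m * (b ^ 2 - a ^ 2) < 2 * ∫ s in a..b, f s := by
  have hlin : IntervalIntegrable (fun s => m * s) volume a b :=
    (continuous_const.mul continuous_id).intervalIntegrable a b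
  have hpos : 0 < ∫ s in a..b, (f s - m * s) :=
    intervalIntegral_pos_of_pos_on (hf.sub hlin) (fun s hs => sub_pos.mpr (hlt s hs)) hab
  rw [integral_sub hf hlin, intervalIntegral.integral_const_mul, integral_id] at hpos
  linarith

theorem stmt_2_general (f : ℝ → ℝ) (hf : Continuous f)
    (F : ℝ → ℝ) (hF : ∀ t, F t = ∫ s in (0:ℝ)..t, f s)
    (hmono : StrictMonoOn (fun t => f t / |t|) (Set.Iio 0)) :
    StrictAntiOn (fun t => t * f t - 2 * F t) (Set.Iio 0) := by
  intro a ha b hb hab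
  set g := fun t => f t / |t|
  have hfg : ∀ t ∈ Set.Iio (0 : ℝ), f t = -t * g t := fun t (ht : t < 0) => by
    rw [show g t = f t / |t| from rfl, abs_of_neg ht, mul_div_cancel₀ _ (neg_ne_zero.mpr ht.ne)]
  have hFab : F b - F a = ∫ s in a..b, f s := by
    rw [hF, hF, integral_interval_sub_left (hf.intervalIntegrable 0 b)
      (hf.intervalIntegrable 0 a)]
  have hlower : -g a * (b ^ 2 - a ^ 2) < 2 * (F b - F a) := by
    refine hFab ▸ mul_sq_sub_sq_lt_two_mul_integral hab (hf.intervalIntegrable a b) ?_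
    intro s ⟨has, hsb⟩
    have hs : s ∈ Set.Iio (0 : ℝ) := lt_trans hsb hb
    rw [hfg s hs]
    nlinarith [hmono ha hs has, show s < 0 from hs]
  have hgab : g a < g b := hmono ha hb hab
  simp only [hfg a ha, hfg b hb]
  nlinarith [mul_le_mul_of_nonneg_left hgab.le (sq_nonneg b)]

theorem stmt_2 (f : ℝ → ℝ) (hf : Continuous f) (h0 : f 0 = 0)
    (F : ℝ → ℝ) (hF : ∀ t, F t = ∫ s in (0:ℝ)..t, f s)
    (hmono : StrictMonoOn (fun t => f t / |t|) (Set.Iio 0)) :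
    StrictAntiOn (fun t => t * f t - 2 * F t) (Set.Iio 0) :=
  stmt_2_general f hf F hF hmono
end

section
/- Let f : ℝ → ℝ be continuous with t ↦ f(t)/t strictly increasing on (0, ∞), and in a Hilbert space let u ≥ 0, u ≠ 0 satisfy ‖u‖² ≤ ∫ f(u)·u. If t > 0 is such that t²‖u‖² = ∫ f(tu)·tu (i.e., tu lies on the Nehari set), then t ≤ 1. -/
/-! If `t > 1`, strict monotonicity of `s ↦ f s / s` gives `t² f(U) U ≤ f(tU) tU` pointwise, strictly
where `U > 0`. Integrating, the Nehari identity for `tU` and `‖u‖² ≤ ∫ f(U) U` force the nonnegative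
difference to have integral `≤ 0`, although it is positive wherever `f(U) U ≠ 0`, a set of positive
measure because `∫ f(U) U ≥ ‖u‖² > 0`. -/

open MeasureTheory Function

theorem sq_mul_mul_self_lt_of_strictMonoOn_div {f : ℝ → ℝ}
    (hmono : StrictMonoOn (fun s => f s / s) (Set.Ioi 0)) {a t : ℝ} (ha : 0 < a) (ht : 1 < t) :
    t ^ 2 * (f a * a) < f (t * a) * (t * a) := by
  have hta : 0 < t * a := by positivity
  have hquot : f a / a < f (t * a) / (t * a) :=
    hmono ha hta (lt_mul_of_one_lt_left ha ht)
  calc t ^ 2 * (f a * a) = (t * a) ^ 2 * (f a / a) := by field_simp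
    _ < (t * a) ^ 2 * (f (t * a) / (t * a)) := by gcongr
    _ = f (t * a) * (t * a) := by field_simp

theorem sq_mul_mul_self_le_of_strictMonoOn_div {f : ℝ → ℝ}
    (hmono : StrictMonoOn (fun s => f s / s) (Set.Ioi 0)) {a t : ℝ} (ha : 0 ≤ a) (ht : 1 < t) :
    t ^ 2 * (f a * a) ≤ f (t * a) * (t * a) := by
  rcases ha.lt_or_eq with ha | rfl
  · exact (sq_mul_mul_self_lt_of_strictMonoOn_div hmono ha ht).le
  · simp

theorem integral_pos_of_support_subset {X : Type*} [MeasurableSpace X] {μ : Measure X}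
    {g h : X → ℝ} (hh : 0 < ∫ x, h x ∂μ) (hsupp : support h ⊆ support g) (hg : 0 ≤ g)
    (hgi : Integrable g μ) : 0 < ∫ x, g x ∂μ := by
  have hh_supp : μ (support h) ≠ 0 := fun h0 =>
    hh.ne' (integral_eq_zero_of_ae (Measure.measure_support_eq_zero_iff μ |>.mp h0))
  rw [integral_pos_iff_support_of_nonneg hg hgi]
  exact (pos_iff_ne_zero.mpr hh_supp).trans_le (measure_mono hsupp)

theorem stmt_15_general (f : ℝ → ℝ)
    (hmono : StrictMonoOn (fun t => f t / t) (Set.Ioi 0))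
    {E : Type*} [NormedAddCommGroup E]
    {X : Type*} [MeasurableSpace X] (μ : Measure X)
    (u : E) (hu : u ≠ 0) (U : X → ℝ) (hU : ∀ x, 0 ≤ U x)
    (hint : Integrable (fun x => f (U x) * U x) μ)
    (hle : ‖u‖ ^ 2 ≤ ∫ x, f (U x) * U x ∂μ)
    (t : ℝ)
    (hintt : Integrable (fun x => f (t * U x) * (t * U x)) μ)
    (hNehari : t ^ 2 * ‖u‖ ^ 2 = ∫ x, f (t * U x) * (t * U x) ∂μ) :
    t ≤ 1 := by
  by_contra! ht1
  set g : X → ℝ := fun x => f (t * U x) * (t * U x) - t ^ 2 * (f (U x) * U x)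
  have hg_nonneg : 0 ≤ g := fun x =>
    sub_nonneg.mpr (sq_mul_mul_self_le_of_strictMonoOn_div hmono (hU x) ht1)
  have hsupp : support (fun x => f (U x) * U x) ⊆ support g := by
    intro x hx
    have hUx : 0 < U x := (hU x).lt_of_ne fun h0 => hx (by simp [← h0])
    exact (sub_pos.mpr (sq_mul_mul_self_lt_of_strictMonoOn_div hmono hUx ht1)).ne'
  have hpos : 0 < ∫ x, f (U x) * U x ∂μ :=
    (pow_pos (norm_pos_iff.mpr hu) 2).trans_le hle
  have hg_pos : 0 < ∫ x, g x ∂μ :=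
    integral_pos_of_support_subset hpos hsupp hg_nonneg (hintt.sub (hint.const_mul _))
  have hg_int : ∫ x, g x ∂μ = t ^ 2 * (‖u‖ ^ 2 - ∫ x, f (U x) * U x ∂μ) := by
    rw [integral_sub hintt (hint.const_mul _), integral_const_mul, ← hNehari]
    ring
  have : t ^ 2 * (‖u‖ ^ 2 - ∫ x, f (U x) * U x ∂μ) ≤ 0 :=
    mul_nonpos_of_nonneg_of_nonpos (sq_nonneg t) (sub_nonpos.mpr hle)
  linarith

theorem stmt_15 (f : ℝ → ℝ) (hf : Continuous f)
    (hmono : StrictMonoOn (fun t => f t / t) (Set.Ioi 0))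
    {E : Type*} [NormedAddCommGroup E] [InnerProductSpace ℝ E]
    {X : Type*} [MeasurableSpace X] (μ : Measure X)
    (u : E) (hu : u ≠ 0) (U : X → ℝ) (hU : ∀ x, 0 ≤ U x)
    (hint : Integrable (fun x => f (U x) * U x) μ)
    (hle : ‖u‖ ^ 2 ≤ ∫ x, f (U x) * U x ∂μ)
    (t : ℝ) (ht : 0 < t)
    (hintt : Integrable (fun x => f (t * U x) * (t * U x)) μ)
    (hNehari : t ^ 2 * ‖u‖ ^ 2 = ∫ x, f (t * U x) * (t * U x) ∂μ) :
    t ≤ 1 :=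
  stmt_15_general f hmono μ u hu U hU hint hle t hintt hNehari
end
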